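/- arXiv:2506.13184 — 4 statements merged into one kernel-verified Lean document; each statement's English description precedes it below -/
import Mathlib

section
/- Let 1 → ℤ^r ⊕ T → G → (ℤ/p)^b → 1 be a central group extension, where T is a finite abelian group and p is a prime such that every torsion element of G has order strictly less than p. Then r ≥ b. -/
/-!
Every commutator `⁅g, h⁆` lies in the central kernel, so `⁅g, h⁆ ^ p = ⁅g ^ p, h⁆ = 1` because
`g ^ p` is central too; as `G` has no elements of order `p`, `G` is abelian. Then
`g ↦ (ℤ^r-part of g ^ p) mod p` is a homomorphism `G → (ℤ/p)^r` whose kernel lies in `ker π`: if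
the `ℤ^r`-part of `g ^ p` is `p • w` and `k` corresponds to `(w, 1)`, then `(g k⁻¹) ^ p` lies in
the finite part `T`, so `g k⁻¹` is torsion of order prime to `p`, while its image in `(ℤ/p)^b`
has order dividing `p`. Hence `p ^ b ≤ p ^ r`.
-/

open Function Multiplicative
open scoped commutatorElement

section Group

variable {G : Type*} [Group G]

theorem map_eq_one_of_pow_eq_one_of_coprime {H : Type*} [Monoid H] {p : ℕ} (f : G →* H) {x : G}
    (hx : (orderOf x).Coprime p) (hfx : f x ^ p = 1) : f x = 1 :=
  orderOf_eq_one_iff.mp <| Nat.eq_one_of_dvd_coprimes hx (orderOf_map_dvd f x)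
    (orderOf_dvd_of_pow_eq_one hfx)

theorem commutatorElement_pow_left_of_commute {g h : G} (hc : Commute ⁅g, h⁆ g) (n : ℕ) :
    ⁅g ^ n, h⁆ = ⁅g, h⁆ ^ n := by
  induction n with
  | zero => simp
  | succ n ih =>
    rw [pow_succ', commutatorElement_mul_left_eq_conj_mul, ih, ← (hc.pow_left n).eq,
      mul_inv_cancel_right, pow_succ]

theorem commute_of_pow_mem_center {p : ℕ} (hp : p ≠ 0)
    (hcop : ∀ x : G, IsOfFinOrder x → (orderOf x).Coprime p) {g h : G}
    (hgh : ⁅g, h⁆ ∈ Subgroup.center G) (hg : g ^ p ∈ Subgroup.center G) : Commute g h := by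
  have hc : Commute ⁅g, h⁆ g := (Subgroup.mem_center_iff.mp hgh g).symm
  have hcp : ⁅g, h⁆ ^ p = 1 := by
    rw [← commutatorElement_pow_left_of_commute hc, commutatorElement_eq_one_iff_commute]
    exact (Subgroup.mem_center_iff.mp hg h).symm
  have hfin : IsOfFinOrder ⁅g, h⁆ := isOfFinOrder_iff_pow_eq_one.mpr ⟨p, hp.bot_lt, hcp⟩
  exact commutatorElement_eq_one_iff_commute.mp <|
    map_eq_one_of_pow_eq_one_of_coprime (MonoidHom.id G) (hcop _ hfin) hcp

theorem natCard_le_natCard_of_ker_le {H K : Type*} [Group H] [Group K] [Finite K] {π : G →* H}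
    (hπ : Surjective π) (φ : G →* K) (hker : φ.ker ≤ π.ker) : Nat.card H ≤ Nat.card K := by
  refine Nat.card_le_card_of_injective (φ ∘ surjInv hπ) fun x y hxy => ?_
  have : surjInv hπ x * (surjInv hπ y)⁻¹ ∈ π.ker :=
    hker (by simpa [MonoidHom.mem_ker, mul_inv_eq_one] using hxy)
  simpa [MonoidHom.mem_ker, mul_inv_eq_one, surjInv_eq hπ] using this

end Group

theorem exists_eq_pow_mul_isOfFinOrder {A T : Type*} [Group A] [Group T] [Finite T] {r : ℕ}
    (e : A ≃* Multiplicative (Fin r → ℤ) × T) (p : ℕ) {a : A}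
    (ha : ∀ i, (p : ℤ) ∣ (e a).1.toAdd i) : ∃ k t : A, IsOfFinOrder t ∧ a = k ^ p * t := by
  choose w hw using ha
  let inr := MonoidHom.inr (Multiplicative (Fin r → ℤ)) T
  refine ⟨e.symm (ofAdd w, 1), e.symm (inr (e a).2), ?_, ?_⟩
  · exact (e.symm : _ →* A).isOfFinOrder (inr.isOfFinOrder (isOfFinOrder_of_finite _))
  · apply e.injective
    rw [map_mul, map_pow, e.apply_symm_apply, e.apply_symm_apply]
    ext i <;> simp [hw, inr]

section PowModP

variable {G T : Type*} [CommGroup G] [Group T] {r p : ℕ} {N : Subgroup G}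

def powModP (hN : ∀ g : G, g ^ p ∈ N) (e : N ≃* Multiplicative (Fin r → ℤ) × T) :
    G →* Multiplicative (Fin r → ZMod p) :=
  (AddMonoidHom.toMultiplicative ((Int.castAddHom (ZMod p)).compLeft (Fin r))).comp <|
    (MonoidHom.fst _ _).comp <| e.toMonoidHom.comp <| (powMonoidHom p).codRestrict N hN

theorem ker_powModP_le [Finite T] (hN : ∀ g : G, g ^ p ∈ N)
    (e : N ≃* Multiplicative (Fin r → ℤ) × T) (hp : p ≠ 0)
    (hcop : ∀ g : G, IsOfFinOrder g → (orderOf g).Coprime p) : (powModP hN e).ker ≤ N := by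
  intro g hg
  have hdvd : ∀ i, (p : ℤ) ∣ (e ⟨g ^ p, hN g⟩).1.toAdd i := fun i => by
    have hi : ((toAdd (e ⟨g ^ p, hN g⟩).1 i : ℤ) : ZMod p) = 0 :=
      congr_arg (fun x : Multiplicative (Fin r → ZMod p) => toAdd x i) (MonoidHom.mem_ker.mp hg)
    exact (ZMod.intCast_zmod_eq_zero_iff_dvd _ _).mp hi
  obtain ⟨k, t, ht, hkt⟩ := exists_eq_pow_mul_isOfFinOrder e p hdvd
  have hpow : (g * (k : G)⁻¹) ^ p = t := by
    have hkt' : g ^ p = k ^ p * t := congrArg Subtype.val hkt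
    rw [mul_pow, inv_pow, hkt', mul_inv_cancel_comm]
  have hfin : IsOfFinOrder (g * (k : G)⁻¹) :=
    .of_pow (hpow ▸ Submonoid.isOfFinOrder_coe.mpr ht) hp
  have hq : QuotientGroup.mk' N (g * (k : G)⁻¹) = 1 :=
    map_eq_one_of_pow_eq_one_of_coprime _ (hcop _ hfin) <| by
      rw [← map_pow, hpow, QuotientGroup.mk'_apply, QuotientGroup.eq_one_iff]
      exact t.2
  exact (N.mul_mem_cancel_right (N.inv_mem k.2)).mp ((QuotientGroup.eq_one_iff _).mp hq)

end PowModP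

/-- Let `1 → ℤ^r ⊕ T → G → (ℤ/p)^b → 1` be a central group extension, where `T`
is a finite abelian group and `p` is a prime such that every torsion element of
`G` has order strictly less than `p`. Then `r ≥ b`. -/
theorem rank_ge_of_central_extension {G T : Type*} [Group G] [CommGroup T] [Finite T]
    (r b p : ℕ) (hp : p.Prime)
    (π : G →* Multiplicative (Fin b → ZMod p)) (hπ : Function.Surjective π)
    (hcentral : π.ker ≤ Subgroup.center G)
    (e : π.ker ≃* (Multiplicative (Fin r → ℤ) × T))
    (htor : ∀ g : G, IsOfFinOrder g → orderOf g < p) :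
    b ≤ r := by
  have hcop (g : G) (hg : IsOfFinOrder g) : (orderOf g).Coprime p :=
    (Nat.coprime_of_lt_prime hg.orderOf_pos.ne' (htor g hg) hp).symm
  have hpow (g : G) : g ^ p ∈ π.ker := by
    rw [MonoidHom.mem_ker]
    ext i
    simp
  have hcomm (g h : G) : Commute g h := by
    refine commute_of_pow_mem_center hp.ne_zero hcop (hcentral ?_) (hcentral (hpow g))
    rw [MonoidHom.mem_ker, map_commutatorElement, commutatorElement_eq_one_iff_commute]
    exact Commute.all _ _
  let : CommGroup G := { ‹Group G› with mul_comm := fun g h => (hcomm g h).eq }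
  have : NeZero p := ⟨hp.ne_zero⟩
  have hcard := natCard_le_natCard_of_ker_le hπ _ (ker_powModP_le hpow e hp.ne_zero hcop)
  simp only [Nat.card_eq_fintype_card, Fintype.card_multiplicative, Fintype.card_fun,
    ZMod.card, Fintype.card_fin] at hcard
  exact (Nat.pow_le_pow_iff_right hp.one_lt).mp hcard
end

section
/- Let 1 → ℤ^r → G → (ℤ/p)^b → 1 be a central extension with G torsion-free, p prime. Then r ≥ b. -/
/-!
Commutators land in the central subgroup `A ≅ ℤ^r`, so `⁅g, h⁆ ^ p = ⁅g ^ p, h⁆ = 1` because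
`g ^ p ∈ A` is central; torsion-freeness makes `G` abelian. Then `g ↦ g ^ p mod pA` is a
homomorphism `G → A / pA ≅ (ℤ/p)^r` whose kernel is exactly `A` (a `p`-th root of a `p`-th power
is unique in a torsion-free abelian group), so `(ℤ/p)^b ≅ G / A` embeds into `(ℤ/p)^r`.
-/

open scoped commutatorElement

theorem commutatorElement_pow_left {G : Type*} [Group G] {g h : G} (hc : Commute ⁅g, h⁆ g)
    (n : ℕ) : ⁅g ^ n, h⁆ = ⁅g, h⁆ ^ n := by
  induction n with
  | zero => simp
  | succ n ih =>
    calc ⁅g ^ (n + 1), h⁆ = g ^ n * ⁅g, h⁆ * (g ^ n)⁻¹ * ⁅g ^ n, h⁆ := by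
          simp only [commutatorElement_def]; group
      _ = ⁅g, h⁆ ^ (n + 1) := by
          rw [(hc.pow_right n).symm.eq, mul_inv_cancel_right, ih, pow_succ']

theorem commute_of_commutator_mem_center_of_pow_mem_center {G : Type*} [Group G]
    (htf : ∀ g : G, IsOfFinOrder g → g = 1) {n : ℕ} (hn : 0 < n) {g h : G}
    (hc : ⁅g, h⁆ ∈ Subgroup.center G) (hg : g ^ n ∈ Subgroup.center G) : Commute g h := by
  have hcn : ⁅g, h⁆ ^ n = 1 := by
    rw [← commutatorElement_pow_left (Subgroup.mem_center_iff.mp hc g).symm,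
      commutatorElement_eq_one_iff_commute]
    exact (Subgroup.mem_center_iff.mp hg h).symm
  exact commutatorElement_eq_one_iff_commute.mp
    (htf _ (isOfFinOrder_iff_pow_eq_one.mpr ⟨n, hn, hcn⟩))

theorem Subgroup.card_quotient_le_of_pow_mem {G M : Type*} [CommGroup G] [IsMulTorsionFree G]
    [Group M] [Finite M] (A : Subgroup G) {n : ℕ} (hn : n ≠ 0) (hpow : ∀ g, g ^ n ∈ A)
    (ρ : A →* M) (hρ : ∀ a, ρ a = 1 ↔ ∃ k : A, k ^ n = a) : Nat.card (G ⧸ A) ≤ Nat.card M := by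
  let χ : G →* M := ρ.comp ((powMonoidHom n).codRestrict A hpow)
  have hker : χ.ker = A := by
    ext g
    simp only [MonoidHom.mem_ker, χ, MonoidHom.comp_apply, hρ]
    constructor
    · rintro ⟨k, hk⟩
      have hkg : (k : G) = g := pow_left_injective hn (congrArg Subtype.val hk)
      exact hkg ▸ k.2
    · exact fun hg => ⟨⟨g, hg⟩, rfl⟩
  rw [← hker]
  exact Nat.card_le_card_of_injective _ (QuotientGroup.kerLift_injective χ)

def Int.reduceModPi (ι : Type*) (n : ℕ) :
    Multiplicative (ι → ℤ) →* Multiplicative (ι → ZMod n) :=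
  AddMonoidHom.toMultiplicative ((Int.castAddHom (ZMod n)).compLeft ι)

theorem Int.reduceModPi_eq_one_iff {ι : Type*} {n : ℕ} (v : Multiplicative (ι → ℤ)) :
    Int.reduceModPi ι n v = 1 ↔ ∃ u, u ^ n = v := by
  calc Int.reduceModPi ι n v = 1 ↔ ∀ i, (n : ℤ) ∣ v.toAdd i := by
        simp [Int.reduceModPi, funext_iff, ZMod.intCast_zmod_eq_zero_iff_dvd]
    _ ↔ ∃ u : ι → ℤ, ∀ i, n * u i = v.toAdd i := by
        simp only [Dvd.dvd, eq_comm, Classical.skolem]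
    _ ↔ ∃ u, u ^ n = v := by
        rw [Multiplicative.ofAdd.surjective.exists]
        simp [← Multiplicative.toAdd.injective.eq_iff, funext_iff]

/-- Let `1 → ℤ^r → G → (ℤ/p)^b → 1` be a central extension with `G`
torsion-free and `p` prime. Then `r ≥ b`. -/
theorem rank_ge_of_central_extension_torsionfree {G : Type*} [Group G]
    (r b p : ℕ) (hp : p.Prime)
    (π : G →* Multiplicative (Fin b → ZMod p)) (hπ : Function.Surjective π)
    (hcentral : π.ker ≤ Subgroup.center G)
    (e : π.ker ≃* Multiplicative (Fin r → ℤ))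
    (htf : ∀ g : G, IsOfFinOrder g → g = 1) :
    b ≤ r := by
  have : Fact p.Prime := ⟨hp⟩
  have hpow : ∀ g : G, g ^ p ∈ π.ker := fun g => by
    rw [MonoidHom.mem_ker]; ext i; simp
  have hcomm : ∀ g h : G, Commute g h := fun g h =>
    commute_of_commutator_mem_center_of_pow_mem_center htf hp.pos
      (hcentral (by rw [MonoidHom.mem_ker, map_commutatorElement,
        commutatorElement_eq_one_iff_commute]; exact .all _ _))
      (hcentral (hpow g))
  let _ : CommGroup G := { ‹Group G› with mul_comm := fun g h => (hcomm g h).eq }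
  have : IsMulTorsionFree G := .of_not_isOfFinOrder fun g hg hfin => hg (htf g hfin)
  have hρ : ∀ a, Int.reduceModPi (Fin r) p (e a) = 1 ↔ ∃ k, k ^ p = a := fun a => by
    rw [Int.reduceModPi_eq_one_iff, e.surjective.exists]
    simp only [← map_pow, e.apply_eq_iff_eq]
  have hcard : p ^ b ≤ p ^ r := by
    calc p ^ b = Nat.card (G ⧸ π.ker) := by
          rw [Nat.card_congr (QuotientGroup.quotientKerEquivOfSurjective π hπ).toEquiv]; simp
      _ ≤ Nat.card (Multiplicative (Fin r → ZMod p)) :=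
          π.ker.card_quotient_le_of_pow_mem hp.ne_zero hpow
            ((Int.reduceModPi (Fin r) p).comp e.toMonoidHom) hρ
      _ = p ^ r := by simp
  exact (Nat.pow_le_pow_iff_right hp.one_lt).mp hcard
end

section
/- Let 1 → A → G → (ℤ/p)^b → 1 be a central extension where A = ℤ^r ⊕ T with T the torsion subgroup of A, and suppose every torsion element of G has order less than the prime p. Then the quotient G/T is torsion-free. -/
/-!
An element of `G` whose order is less than the prime `p` maps to an element of
`(ℤ/p)^b` whose order divides both `p` and a number coprime to `p`, so it lies in
`ker π`. Hence `T` is exactly the set of torsion elements of `G`. If `g^n ∈ T`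
with `n ≠ 0`, then `g^n`, and therefore `g`, has finite order, so `g ∈ T`.
-/

lemma pi_zmod_pow_self_eq_one {ι : Type*} (n : ℕ) (y : Multiplicative (ι → ZMod n)) :
    y ^ n = 1 := by
  apply Multiplicative.toAdd.injective
  funext i
  simp [toAdd_pow]

lemma MonoidHom.map_eq_one_of_orderOf_lt_prime {G H : Type*} [Monoid G] [Monoid H]
    (φ : G →* H) {p : ℕ} (hp : p.Prime) (hexp : ∀ y : H, y ^ p = 1) {g : G}
    (hg : IsOfFinOrder g) (hlt : orderOf g < p) : φ g = 1 := by
  have hcop : (orderOf g).Coprime p :=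
    (Nat.coprime_of_lt_prime hg.orderOf_pos.ne' hlt hp).symm
  have hg_pow : φ g ^ orderOf g = 1 := by rw [← map_pow, pow_orderOf_eq_one, map_one]
  simpa [hcop] using pow_gcd_eq_one.mpr ⟨hg_pow, hexp (φ g)⟩

lemma QuotientGroup.eq_one_of_isOfFinOrder_of_forall_mem_iff {G : Type*} [Group G]
    {T : Subgroup G} [T.Normal] (hT : ∀ g : G, g ∈ T ↔ IsOfFinOrder g)
    {x : G ⧸ T} (hx : IsOfFinOrder x) : x = 1 := by
  obtain ⟨g, rfl⟩ := QuotientGroup.mk_surjective x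
  have hg_pow : g ^ orderOf (g : G ⧸ T) ∈ T := by
    rw [← QuotientGroup.eq_one_iff, QuotientGroup.mk_pow, pow_orderOf_eq_one]
  rw [QuotientGroup.eq_one_iff, hT]
  exact ((hT _).mp hg_pow).of_pow hx.orderOf_pos.ne'

theorem quotient_torsion_free_of_central_extension_general {G : Type*} [Group G]
    (b p : ℕ) (hp : p.Prime)
    (π : G →* Multiplicative (Fin b → ZMod p))
    (T : Subgroup G) [hTnormal : T.Normal]
    (hT : ∀ g : G, g ∈ T ↔ g ∈ π.ker ∧ IsOfFinOrder g)
    (htor : ∀ g : G, IsOfFinOrder g → orderOf g < p) :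
    ∀ x : G ⧸ T, IsOfFinOrder x → x = 1 := by
  have hT_torsion : ∀ g : G, g ∈ T ↔ IsOfFinOrder g := fun g =>
    ⟨fun hg => ((hT g).mp hg).2, fun hg => (hT g).mpr
      ⟨π.map_eq_one_of_orderOf_lt_prime hp (pi_zmod_pow_self_eq_one p) hg (htor g hg), hg⟩⟩
  exact fun x hx => QuotientGroup.eq_one_of_isOfFinOrder_of_forall_mem_iff hT_torsion hx

/-- Let `1 → A → G → (ℤ/p)^b → 1` be a central extension where `A ≅ ℤ^r ⊕ T`
with `T` the torsion subgroup of `A`, and suppose every torsion element of `G`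
has order less than the prime `p`. Then `G/T` is torsion-free. -/
theorem quotient_torsion_free_of_central_extension {G : Type*} [Group G]
    (r b p : ℕ) (hp : p.Prime)
    (π : G →* Multiplicative (Fin b → ZMod p)) (hπ : Function.Surjective π)
    (hcentral : π.ker ≤ Subgroup.center G)
    (T : Subgroup G) [hTnormal : T.Normal]
    (hT : ∀ g : G, g ∈ T ↔ g ∈ π.ker ∧ IsOfFinOrder g)
    (e : π.ker ≃* (Multiplicative (Fin r → ℤ) × T))
    (htor : ∀ g : G, IsOfFinOrder g → orderOf g < p) :
    ∀ x : G ⧸ T, IsOfFinOrder x → x = 1 :=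
  quotient_torsion_free_of_central_extension_general b p hp π T (hTnormal := hTnormal) hT htor
end

section
/- Let N be a simply connected nilpotent Lie group, and let Γ ≤ Λ be two lattices of N, with N being c-step nilpotent. Then there exists a chain of subgroups Γ = Λ_0 ⊴ Λ_1 ⊴ ... ⊴ Λ_c = Λ with each Λ_i normal in Λ_{i+1} and each quotient Λ_{i+1}/Λ_i abelian. -/
/-!
Take `Λᵢ = Λ ∩ Γ γ_{c-i}(N)`, where `γₘ(N)` is the lower central series, so that `Λ₀ = Γ` because
`γ_c(N) = 1` and `Λ_c = Λ`. Since `γₘ(N)` is central modulo `γₘ₊₁(N)`, a commutator of two elements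
of `Γ γₘ(N)` agrees modulo `γₘ₊₁(N)` with a commutator of two elements of `Γ`; hence
`[Λᵢ₊₁, Λᵢ₊₁] ≤ Λᵢ`, which gives both the normality of `Λᵢ` in `Λᵢ₊₁` and the abelian quotient.
-/

open scoped commutatorElement

namespace Subgroup

variable {G : Type*} [Group G]

theorem normal_subgroupOf_of_commutator_le {H K : Subgroup G} (hHK : H ≤ K) (hK : ⁅K, K⁆ ≤ H) :
    (H.subgroupOf K).Normal :=
  (normal_subgroupOf_iff_le_normalizer hHK).mpr <|
    le_normalizer_iff_commutator_le_right.mpr ((commutator_mono le_rfl hHK).trans hK)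

theorem commutator_inf_le_inf (A Λ : Subgroup G) : ⁅A ⊓ Λ, A ⊓ Λ⁆ ≤ ⁅A, A⁆ ⊓ Λ :=
  le_inf (commutator_mono inf_le_left inf_le_left)
    ((commutator_mono inf_le_right inf_le_right).trans (commutator_le_self Λ))

theorem commutator_sup_le_sup_of_commutator_top_le (H : Subgroup G) {K L : Subgroup G}
    [K.Normal] [L.Normal] (hLK : ⁅L, ⊤⁆ ≤ K) : ⁅H ⊔ L, H ⊔ L⁆ ≤ H ⊔ K := by
  have hK : ∀ l ∈ L, ∀ g, ⁅l, g⁆ ∈ K := fun l hl g =>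
    hLK (commutator_mem_commutator hl (mem_top g))
  rw [commutator_le]
  intro a ha b hb
  obtain ⟨h, hh, l, hl, rfl⟩ := mem_sup_of_normal_right.mp ha
  obtain ⟨h', hh', l', hl', rfl⟩ := mem_sup_of_normal_right.mp hb
  have hk₁ : h * ⁅l, h' * l'⁆ * h⁻¹ ∈ H ⊔ K :=
    mem_sup_right (Normal.conj_mem inferInstance _ (hK l hl _) h)
  have hk₂ : h' * ⁅l', h⁆⁻¹ * h'⁻¹ ∈ H ⊔ K :=
    mem_sup_right (Normal.conj_mem inferInstance _ (inv_mem (hK l' hl' h)) h')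
  have hH : ⁅h, h'⁆ ∈ H ⊔ K := mem_sup_left (commutator_le_self H (commutator_mem_commutator hh hh'))
  have e : ⁅h * l, h' * l'⁆ =
      (h * ⁅l, h' * l'⁆ * h⁻¹) * ⁅h, h'⁆ * (h' * ⁅l', h⁆⁻¹ * h'⁻¹) := by
    simp only [commutatorElement_def]; group
  exact e ▸ mul_mem (mul_mem hk₁ hH) hk₂

def lowerCentralFiltration (Γ Λ : Subgroup G) (m : ℕ) : Subgroup G :=
  (Γ ⊔ (⊤ : Subgroup G).lowerCentralSeries m) ⊓ Λ

variable (Γ Λ : Subgroup G)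

@[simp]
theorem lowerCentralFiltration_zero : lowerCentralFiltration Γ Λ 0 = Λ := by
  simp [lowerCentralFiltration]

theorem lowerCentralFiltration_of_lowerCentralSeries_eq_bot {m : ℕ}
    (hm : (⊤ : Subgroup G).lowerCentralSeries m = ⊥) (hΓΛ : Γ ≤ Λ) :
    lowerCentralFiltration Γ Λ m = Γ := by
  simpa [lowerCentralFiltration, hm] using hΓΛ

theorem lowerCentralFiltration_succ_le (m : ℕ) :
    lowerCentralFiltration Γ Λ (m + 1) ≤ lowerCentralFiltration Γ Λ m :=
  inf_le_inf_right Λ (sup_le_sup_left (lowerCentralSeries_antitone ⊤ m.le_succ) Γ)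

theorem commutator_lowerCentralFiltration_le (m : ℕ) :
    ⁅lowerCentralFiltration Γ Λ m, lowerCentralFiltration Γ Λ m⁆ ≤
      lowerCentralFiltration Γ Λ (m + 1) :=
  (commutator_inf_le_inf _ Λ).trans <|
    inf_le_inf_right Λ (commutator_sup_le_sup_of_commutator_top_le Γ le_rfl)

end Subgroup

open Manifold Subgroup

theorem lattice_chain_in_nilpotent_lie_group_general
    {N : Type*} [Group N]
    [Group.IsNilpotent N] (c : ℕ) (hc : Group.nilpotencyClass N = c)
    (Γ Λ : Subgroup N)
    (hΓΛ : Γ ≤ Λ) :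
    ∃ chain : Fin (c + 1) → Subgroup N,
      chain 0 = Γ ∧ chain (Fin.last c) = Λ ∧
      (∀ i : Fin c, chain i.castSucc ≤ chain i.succ) ∧
      (∀ i : Fin c, ((chain i.castSucc).subgroupOf (chain i.succ)).Normal) ∧
      (∀ i : Fin c, ∀ a b : N, a ∈ chain i.succ → b ∈ chain i.succ →
        a * b * a⁻¹ * b⁻¹ ∈ chain i.castSucc) := by
  set F := lowerCentralFiltration Γ Λ
  have hidx (i : Fin c) : c - (i.castSucc : ℕ) = c - (i.succ : ℕ) + 1 := by
    simp only [Fin.val_castSucc, Fin.val_succ]; omega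
  have hcomm (i : Fin c) : ⁅F (c - i.succ), F (c - i.succ)⁆ ≤ F (c - i.castSucc) :=
    hidx i ▸ commutator_lowerCentralFiltration_le Γ Λ _
  have hle (i : Fin c) : F (c - i.castSucc) ≤ F (c - i.succ) :=
    hidx i ▸ lowerCentralFiltration_succ_le Γ Λ _
  refine ⟨fun i => F (c - i), ?_, ?_, hle,
    fun i => normal_subgroupOf_of_commutator_le (hle i) (hcomm i),
    fun i a b ha hb => commutator_le.mp (hcomm i) a ha b hb⟩
  · exact lowerCentralFiltration_of_lowerCentralSeries_eq_bot Γ Λ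
      (hc ▸ Subgroup.lowerCentralSeries_nilpotencyClass) hΓΛ
  · simp [F]

/-- Let `N` be a simply connected (`c`-step nilpotent) nilpotent Lie group and
`Γ ≤ Λ` two lattices (discrete cocompact subgroups) of `N`. Then there is a
chain of subgroups `Γ = Λ_0 ⊴ Λ_1 ⊴ ... ⊴ Λ_c = Λ`, each normal in the next,
with abelian successive quotients (expressed by the commutator condition). -/
theorem lattice_chain_in_nilpotent_lie_group
    {E : Type*} [NormedAddCommGroup E] [NormedSpace ℝ E] [FiniteDimensional ℝ E]
    {N : Type*} [TopologicalSpace N] [ChartedSpace E N] [Group N]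
    [IsTopologicalGroup N] [LieGroup 𝓘(ℝ, E) ((⊤ : ℕ∞) : WithTop ℕ∞) N] [SimplyConnectedSpace N]
    [Group.IsNilpotent N] (c : ℕ) (hc : Group.nilpotencyClass N = c)
    (Γ Λ : Subgroup N)
    [DiscreteTopology Γ] [DiscreteTopology Λ]
    [CompactSpace (N ⧸ Γ)] [CompactSpace (N ⧸ Λ)]
    (hΓΛ : Γ ≤ Λ) :
    ∃ chain : Fin (c + 1) → Subgroup N,
      chain 0 = Γ ∧ chain (Fin.last c) = Λ ∧
      (∀ i : Fin c, chain i.castSucc ≤ chain i.succ) ∧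
      (∀ i : Fin c, ((chain i.castSucc).subgroupOf (chain i.succ)).Normal) ∧
      (∀ i : Fin c, ∀ a b : N, a ∈ chain i.succ → b ∈ chain i.succ →
        a * b * a⁻¹ * b⁻¹ ∈ chain i.castSucc) :=
  lattice_chain_in_nilpotent_lie_group_general c hc Γ Λ hΓΛ
end
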